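/- arXiv:1610.02888 — 2 statements merged into one kernel-verified Lean document; each statement's English description precedes it below -/
import Mathlib

section
/- Let α₁,…,α_d ∈ (0,2], R ≥ 0, γ > 0, z ∈ ℝ, and m(u) := (∏_{i=1}^d u^{2/α_i} · Ψ(u))^{-1} (up to positive constant factors H_i). If u_z = u + (1/u)(−√(R/γ) z + R/(2γ)) + o(1/u) as u → ∞, then m(u)/m(u_z) → exp(−R/(2γ) + √(R/γ)·z) as u → ∞. -/
open Filter Real MeasureTheory Asymptotics

/-- The standard normal tail function. -/
noncomputable def normTail (u : ℝ) : ℝ :=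
  ∫ t in Set.Ioi u, (1 / Real.sqrt (2 * Real.pi)) * Real.exp (-t ^ 2 / 2)

/-!
Mills' ratio: integrating `e^{-t²/2} ≤ (t/u) e^{-t²/2}` and `(1 + 1/t²) e^{-t²/2} ≥ e^{-t²/2}`
over `(u, ∞)`, where `t e^{-t²/2}` and `(1 + 1/t²) e^{-t²/2}` have explicit antiderivatives, gives
`e^{-u²/2} / (u (1 + 1/u²)) ≤ Ψ(u) √(2π) ≤ e^{-u²/2} / u`, so `Ψ(u) ~ e^{-u²/2} / (√(2π) u)`.
If `u_z = u + c/u + o(1/u)` then `u_z² - u² → 2c` and `u_z / u → 1`, hence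
`Ψ(u_z) / Ψ(u) → e^{-c}` while the power factors have ratio tending to `1`.
-/

open Topology Set

lemma tendsto_exp_neg_sq_half_atTop :
    Tendsto (fun t : ℝ => exp (-t ^ 2 / 2)) atTop (𝓝 0) :=
  tendsto_exp_atBot.comp <|
    (tendsto_neg_atBot_iff.mpr (tendsto_pow_atTop two_ne_zero)).atBot_div_const two_pos

lemma hasDerivAt_exp_neg_sq_half (x : ℝ) :
    HasDerivAt (fun t : ℝ => exp (-t ^ 2 / 2)) (-x * exp (-x ^ 2 / 2)) x := by
  have h : HasDerivAt (fun t : ℝ => -t ^ 2 / 2) (-x) x := by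
    refine ((hasDerivAt_pow 2 x).neg.div_const 2).congr_deriv ?_
    ring
  exact h.exp.congr_deriv (by ring)

lemma integrableOn_exp_neg_sq_half (u : ℝ) :
    IntegrableOn (fun t : ℝ => exp (-t ^ 2 / 2)) (Ioi u) := by
  have h : Integrable (fun t : ℝ => exp (-(1 / 2) * t ^ 2)) :=
    integrable_exp_neg_mul_sq (by norm_num)
  convert h.integrableOn using 3
  ring

section MillsRatio

variable {u : ℝ}

lemma hasDerivAt_neg_exp_neg_sq_half (x : ℝ) :
    HasDerivAt (fun t : ℝ => -exp (-t ^ 2 / 2)) (x * exp (-x ^ 2 / 2)) x :=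
  (hasDerivAt_exp_neg_sq_half x).neg.congr_deriv (by ring)

lemma hasDerivAt_neg_exp_neg_sq_half_div {x : ℝ} (hx : x ≠ 0) :
    HasDerivAt (fun t : ℝ => -(exp (-t ^ 2 / 2) / t)) ((1 + 1 / x ^ 2) * exp (-x ^ 2 / 2)) x := by
  refine ((hasDerivAt_exp_neg_sq_half x).div (hasDerivAt_id' x) hx).neg.congr_deriv ?_
  field_simp
  ring

lemma tendsto_neg_exp_neg_sq_half_div_atTop :
    Tendsto (fun t : ℝ => -(exp (-t ^ 2 / 2) / t)) atTop (𝓝 0) := by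
  simpa [div_eq_mul_inv] using (tendsto_exp_neg_sq_half_atTop.mul tendsto_inv_atTop_zero).neg

lemma integral_Ioi_mul_exp_neg_sq_half (hu : 0 ≤ u) :
    ∫ t in Ioi u, t * exp (-t ^ 2 / 2) = exp (-u ^ 2 / 2) := by
  rw [integral_Ioi_of_hasDerivAt_of_nonneg' (fun x _ => hasDerivAt_neg_exp_neg_sq_half x)
    (fun x hx => by have : 0 < x := hu.trans_lt hx; positivity)
    (by simpa using tendsto_exp_neg_sq_half_atTop.neg)]
  ring

lemma integrableOn_mul_exp_neg_sq_half (hu : 0 ≤ u) :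
    IntegrableOn (fun t : ℝ => t * exp (-t ^ 2 / 2)) (Ioi u) :=
  integrableOn_Ioi_deriv_of_nonneg' (fun x _ => hasDerivAt_neg_exp_neg_sq_half x)
    (fun x hx => by have : 0 < x := hu.trans_lt hx; positivity)
    (by simpa using tendsto_exp_neg_sq_half_atTop.neg)

lemma integral_Ioi_one_add_inv_sq_mul_exp_neg_sq_half (hu : 0 < u) :
    ∫ t in Ioi u, (1 + 1 / t ^ 2) * exp (-t ^ 2 / 2) = exp (-u ^ 2 / 2) / u := by
  rw [integral_Ioi_of_hasDerivAt_of_nonneg'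
    (fun x hx => hasDerivAt_neg_exp_neg_sq_half_div (hu.trans_le hx).ne')
    (fun x _ => by positivity) tendsto_neg_exp_neg_sq_half_div_atTop]
  ring

lemma integrableOn_one_add_inv_sq_mul_exp_neg_sq_half (hu : 0 < u) :
    IntegrableOn (fun t : ℝ => (1 + 1 / t ^ 2) * exp (-t ^ 2 / 2)) (Ioi u) :=
  integrableOn_Ioi_deriv_of_nonneg'
    (fun x hx => hasDerivAt_neg_exp_neg_sq_half_div (hu.trans_le hx).ne')
    (fun x _ => by positivity) tendsto_neg_exp_neg_sq_half_div_atTop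

lemma integral_Ioi_exp_neg_sq_half_le (hu : 0 < u) :
    ∫ t in Ioi u, exp (-t ^ 2 / 2) ≤ exp (-u ^ 2 / 2) / u := by
  calc ∫ t in Ioi u, exp (-t ^ 2 / 2)
      ≤ ∫ t in Ioi u, u⁻¹ * (t * exp (-t ^ 2 / 2)) := by
        refine setIntegral_mono_on (integrableOn_exp_neg_sq_half u)
          ((integrableOn_mul_exp_neg_sq_half hu.le).const_mul _) measurableSet_Ioi fun t ht => ?_
        rw [← mul_assoc]
        refine le_mul_of_one_le_left (exp_pos _).le ?_
        rw [inv_mul_eq_div, one_le_div hu]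
        exact (mem_Ioi.mp ht).le
    _ = exp (-u ^ 2 / 2) / u := by
        rw [integral_const_mul, integral_Ioi_mul_exp_neg_sq_half hu.le, inv_mul_eq_div]

lemma le_one_add_inv_sq_mul_integral_Ioi_exp_neg_sq_half (hu : 0 < u) :
    exp (-u ^ 2 / 2) / u ≤ (1 + 1 / u ^ 2) * ∫ t in Ioi u, exp (-t ^ 2 / 2) := by
  rw [← integral_Ioi_one_add_inv_sq_mul_exp_neg_sq_half hu, ← integral_const_mul]
  refine setIntegral_mono_on (integrableOn_one_add_inv_sq_mul_exp_neg_sq_half hu)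
    ((integrableOn_exp_neg_sq_half u).const_mul _) measurableSet_Ioi fun t ht => ?_
  have hut : u ≤ t := (mem_Ioi.mp ht).le
  gcongr

lemma integral_Ioi_exp_neg_sq_half_isEquivalent :
    (fun u => ∫ t in Ioi u, exp (-t ^ 2 / 2)) ~[atTop] fun u => exp (-u ^ 2 / 2) / u := by
  refine isEquivalent_of_tendsto_one ?_
  have hlower : Tendsto (fun u : ℝ => (1 + 1 / u ^ 2)⁻¹) atTop (𝓝 1) := by
    simpa using ((tendsto_pow_atTop (α := ℝ) two_ne_zero).inv_tendsto_atTop.const_add 1).inv₀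
      (by norm_num)
  refine tendsto_of_tendsto_of_tendsto_of_le_of_le' hlower tendsto_const_nhds ?_ ?_
  all_goals
    filter_upwards [eventually_gt_atTop 0] with u hu
    have hE : 0 < exp (-u ^ 2 / 2) / u := by positivity
    simp only [Pi.div_apply]
  · rw [le_div_iff₀ hE, inv_mul_le_iff₀ (by positivity)]
    exact le_one_add_inv_sq_mul_integral_Ioi_exp_neg_sq_half hu
  · rw [div_le_one hE]
    exact integral_Ioi_exp_neg_sq_half_le hu

end MillsRatio

lemma normTail_isEquivalent :
    normTail ~[atTop] fun u => 1 / √(2 * π) * (exp (-u ^ 2 / 2) / u) := by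
  have h := IsEquivalent.refl (u := fun _ : ℝ => 1 / √(2 * π)) (l := atTop) |>.mul
    integral_Ioi_exp_neg_sq_half_isEquivalent
  convert h using 1
  · ext u
    exact integral_const_mul _ _
  · rfl

section ShiftedArgument

variable {f : ℝ → ℝ} {c : ℝ}

lemma tendsto_mul_sub_of_isLittleO
    (hf : (fun u => f u - u - (1 / u) * c) =o[atTop] fun u => 1 / u) :
    Tendsto (fun u => u * (f u - u)) atTop (𝓝 c) := by
  have h := hf.tendsto_div_nhds_zero.add_const c
  rw [zero_add] at h
  refine h.congr' ?_
  filter_upwards [eventually_gt_atTop 0] with u hu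
  field_simp
  ring

variable (hf : Tendsto (fun u => u * (f u - u)) atTop (𝓝 c))
include hf

lemma tendsto_sub_self_of_tendsto_mul_sub : Tendsto (fun u => f u - u) atTop (𝓝 0) := by
  have h := hf.mul (tendsto_inv_atTop_zero (𝕜 := ℝ))
  rw [mul_zero] at h
  refine h.congr' ?_
  filter_upwards [eventually_gt_atTop 0] with u hu
  field_simp

lemma tendsto_atTop_of_tendsto_mul_sub : Tendsto f atTop atTop := by
  refine tendsto_atTop_mono' atTop ?_ (tendsto_atTop_add_const_right atTop (-1) tendsto_id)
  filter_upwards [(tendsto_sub_self_of_tendsto_mul_sub hf).eventually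
    (eventually_gt_nhds (by norm_num : (-1 : ℝ) < 0))] with u hu
  simp only [id]
  linarith

lemma tendsto_div_self_of_tendsto_mul_sub : Tendsto (fun u => f u / u) atTop (𝓝 1) := by
  have h := ((tendsto_sub_self_of_tendsto_mul_sub hf).mul tendsto_inv_atTop_zero).const_add 1
  rw [mul_zero, add_zero] at h
  refine h.congr' ?_
  filter_upwards [eventually_gt_atTop 0] with u hu
  field_simp
  ring

lemma tendsto_sq_sub_sq_of_tendsto_mul_sub :
    Tendsto (fun u => f u ^ 2 - u ^ 2) atTop (𝓝 (2 * c)) := by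
  have h := (hf.const_mul 2).add ((tendsto_sub_self_of_tendsto_mul_sub hf).pow 2)
  rw [zero_pow two_ne_zero, add_zero] at h
  exact h.congr fun u => by ring

lemma tendsto_normTail_comp_div_normTail :
    Tendsto (fun u => normTail (f u) / normTail u) atTop (𝓝 (exp (-c))) := by
  have hf_top := tendsto_atTop_of_tendsto_mul_sub hf
  refine ((normTail_isEquivalent.comp_tendsto hf_top).div normTail_isEquivalent).symm
    |>.tendsto_nhds ?_
  have hexp : Tendsto (fun u => exp (-(f u ^ 2 - u ^ 2) / 2)) atTop (𝓝 (exp (-c))) := by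
    refine (continuous_exp.tendsto _).comp ?_
    convert (tendsto_sq_sub_sq_of_tendsto_mul_sub hf).neg.div_const 2 using 2
    ring
  have hratio : Tendsto (fun u => u / f u) atTop (𝓝 1) := by
    simpa using (tendsto_div_self_of_tendsto_mul_sub hf).inv₀ one_ne_zero
  have h := hexp.mul hratio
  rw [mul_one] at h
  refine h.congr' ?_
  filter_upwards [eventually_gt_atTop 0, hf_top.eventually_gt_atTop 0] with u hu hfu
  simp only [Pi.div_apply, Function.comp_apply]
  rw [show -(f u ^ 2 - u ^ 2) / 2 = -f u ^ 2 / 2 - -u ^ 2 / 2 by ring, exp_sub]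
  field_simp

end ShiftedArgument

lemma tendsto_prod_rpow_div_prod_rpow {α ι : Type*} {l : Filter α} {f g : α → ℝ}
    (s : Finset ι) (p : ι → ℝ) (hf : ∀ᶠ x in l, 0 ≤ f x) (hg : ∀ᶠ x in l, 0 ≤ g x)
    (h : Tendsto (fun x => f x / g x) l (𝓝 1)) :
    Tendsto (fun x => (∏ i ∈ s, f x ^ p i) / ∏ i ∈ s, g x ^ p i) l (𝓝 1) := by
  have hlim : Tendsto (fun x => ∏ i ∈ s, (f x / g x) ^ p i) l (𝓝 (∏ i ∈ s, (1 : ℝ) ^ p i)) :=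
    tendsto_finsetProd s fun i _ =>
      (continuousAt_rpow_const 1 (p i) (Or.inl one_ne_zero)).tendsto.comp h
  simp only [one_rpow, Finset.prod_const_one] at hlim
  refine hlim.congr' ?_
  filter_upwards [hf, hg] with x hfx hgx
  simp only [div_rpow hfx hgx, Finset.prod_div_distrib]

theorem stmt5_general (d : ℕ) (α : Fin d → ℝ)
    (R γ z : ℝ)
    (uz : ℝ → ℝ)
    (huz : (fun u => uz u - u - (1 / u) * (-(Real.sqrt (R / γ)) * z + R / (2 * γ)))
      =o[atTop] (fun u => 1 / u)) :
    Tendsto (fun u =>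
        ((∏ i, (uz u) ^ (2 / α i)) * normTail (uz u)) / ((∏ i, u ^ (2 / α i)) * normTail u))
      atTop (nhds (Real.exp (-R / (2 * γ) + Real.sqrt (R / γ) * z))) := by
  have hshift := tendsto_mul_sub_of_isLittleO huz
  have hpowers := tendsto_prod_rpow_div_prod_rpow Finset.univ (fun i => 2 / α i)
    ((tendsto_atTop_of_tendsto_mul_sub hshift).eventually_ge_atTop 0) (eventually_ge_atTop 0)
    (tendsto_div_self_of_tendsto_mul_sub hshift)
  have h := hpowers.mul (tendsto_normTail_comp_div_normTail hshift)
  rw [one_mul] at h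
  convert h using 2 with u
  · exact mul_div_mul_comm _ _ _ _
  · congr 1
    ring

theorem stmt5 (d : ℕ) (α : Fin d → ℝ) (hα : ∀ i, α i ∈ Set.Ioc (0 : ℝ) 2)
    (R γ z : ℝ) (hR : 0 ≤ R) (hγ : 0 < γ)
    (uz : ℝ → ℝ)
    (huz : (fun u => uz u - u - (1 / u) * (-(Real.sqrt (R / γ)) * z + R / (2 * γ)))
      =o[atTop] (fun u => 1 / u)) :
    Tendsto (fun u =>
        ((∏ i, (uz u) ^ (2 / α i)) * normTail (uz u)) / ((∏ i, u ^ (2 / α i)) * normTail u))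
      atTop (nhds (Real.exp (-R / (2 * γ) + Real.sqrt (R / γ) * z))) :=
  stmt5_general d α R γ z uz huz
end

section
/- Let f₁,…,f_d : ℝ → (0,∞) be functions with f_i(u) ≥ ε for all u and some ε > 0, and suppose ∏_i f_i(u) = m(u) where log m(u)/u² → 1/2. Then every sequence u_n → ∞ has a subsequence u_{n_j} such that for each i, either f_i(u_{n_j}) converges to some M_i ∈ [ε,∞), or f_i(u_{n_j}) → ∞ and f_i(u_{n_j}) = exp(γ_i u_{n_j}²)·c_i(u_{n_j}) for some γ_i ∈ [0,1/2] and some positive function c_i with log c_i(u_{n_j}) = o(u_{n_j}²) along the subsequence. -/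
/-!
The exponents `g i u = log (f i u) / u ^ 2` are bounded below by `log ε / u ^ 2 → 0` and add up to
`log (m u) / u ^ 2 → 1 / 2`, so along `u n` they stay in a bounded set. Compactness of that set,
together with compactness of `EReal` for the values `f i (u n)` themselves, yields one subsequence
along which every `f i` tends to a limit in `[ε, ∞]` and every `g i` to some `γ i`; these `γ i` are
nonnegative and sum to `1 / 2`. When `f i → ∞`, the factor `c = f i · exp (-γ i u ^ 2)` satisfies
`log c / u ^ 2 = g i - γ i → 0`.
-/

open Filter Real Topology

lemma eventually_mem_closedBall_of_le_of_sum_le {ι α : Type*} [Fintype ι] {l : Filter α}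
    {g : ι → α → ℝ} {a C : ℝ} (hlow : ∀ᶠ x in l, ∀ i, a ≤ g i x)
    (hsum : ∀ᶠ x in l, ∑ i, g i x ≤ C) :
    ∀ᶠ x in l, (fun i => g i x) ∈ Metric.closedBall 0 (|a| + |C - Fintype.card ι * a|) := by
  filter_upwards [hlow, hsum] with x hlow hsum
  rw [Metric.mem_closedBall, dist_zero_right, pi_norm_le_iff_of_nonneg (by positivity)]
  intro i
  have hi : g i x - a ≤ ∑ k, (g k x - a) :=
    Finset.single_le_sum (f := fun k => g k x - a) (fun k _ => sub_nonneg.2 (hlow k))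
      (Finset.mem_univ i)
  rw [Finset.sum_sub_distrib, Finset.sum_const, Finset.card_univ, nsmul_eq_mul] at hi
  rw [Real.norm_eq_abs, abs_le]
  constructor
  · linarith [neg_abs_le a, abs_nonneg (C - Fintype.card ι * a), hlow i]
  · linarith [le_abs_self a, le_abs_self (C - Fintype.card ι * a)]

lemma exists_subseq_tendsto_coe_ereal_and_tendsto {ι : Type*} [Fintype ι] (x g : ι → ℕ → ℝ)
    {s : Set (ι → ℝ)} (hs : Bornology.IsBounded s) (hg : ∃ᶠ j in atTop, (fun i => g i j) ∈ s) :
    ∃ φ : ℕ → ℕ, StrictMono φ ∧ ∃ (L : ι → EReal) (γ : ι → ℝ), ∀ i,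
      Tendsto (fun j => (x i (φ j) : EReal)) atTop (𝓝 (L i)) ∧
        Tendsto (fun j => g i (φ j)) atTop (𝓝 (γ i)) := by
  obtain ⟨⟨L, γ⟩, -, φ, hφ, hlim⟩ :=
    (isCompact_univ.prod hs.isCompact_closure).tendsto_subseq'
      (x := fun j => ((fun i => (x i j : EReal)), fun i => g i j))
      (hg.mono fun j hj => ⟨Set.mem_univ _, subset_closure hj⟩)
  refine ⟨φ, hφ, L, γ, fun i => ⟨?_, ?_⟩⟩
  · exact ((continuous_apply i).tendsto L).comp hlim.fst_nhds
  · exact ((continuous_apply i).tendsto γ).comp hlim.snd_nhds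

lemma exists_tendsto_nhds_or_tendsto_atTop_of_tendsto_coe_ereal {α : Type*} {l : Filter α}
    [l.NeBot] {x : α → ℝ} {ε : ℝ} {L : EReal} (hx : ∀ᶠ a in l, ε ≤ x a)
    (hL : Tendsto (fun a => (x a : EReal)) l (𝓝 L)) :
    (∃ M ∈ Set.Ici ε, Tendsto x l (𝓝 M)) ∨ Tendsto x l atTop := by
  induction L using EReal.rec with
  | bot =>
    have : (ε : EReal) ≤ ⊥ := ge_of_tendsto hL (hx.mono fun a ha => EReal.coe_le_coe_iff.2 ha)
    exact absurd this (EReal.coe_ne_bot ε ∘ le_bot_iff.1)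
  | coe M =>
    have hM := EReal.tendsto_coe.1 hL
    exact Or.inl ⟨M, ge_of_tendsto hM hx, hM⟩
  | top => exact Or.inr (EReal.tendsto_coe_nhds_top_iff.1 hL)

lemma mem_Icc_of_tendsto_of_tendsto_sum {ι α : Type*} [Fintype ι] {l : Filter α} [l.NeBot]
    {g : ι → α → ℝ} {b : α → ℝ} {γ : ι → ℝ} {s : ℝ} (hb : Tendsto b l (𝓝 0))
    (hbg : ∀ i, ∀ᶠ x in l, b x ≤ g i x) (hg : ∀ i, Tendsto (g i) l (𝓝 (γ i)))
    (hs : Tendsto (fun x => ∑ i, g i x) l (𝓝 s)) (i : ι) : γ i ∈ Set.Icc 0 s := by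
  have hγ : ∀ k, 0 ≤ γ k := fun k => le_of_tendsto_of_tendsto hb (hg k) (hbg k)
  have hsum : ∑ k, γ k = s :=
    tendsto_nhds_unique (tendsto_finsetSum _ fun k _ => hg k) hs
  exact ⟨hγ i, hsum ▸ Finset.single_le_sum (fun k _ => hγ k) (Finset.mem_univ i)⟩

lemma tendsto_log_mul_exp_neg_div {α : Type*} {l : Filter α} {x v : α → ℝ} {γ : ℝ}
    (hx : ∀ᶠ a in l, x a ≠ 0) (hv : ∀ᶠ a in l, v a ≠ 0)
    (h : Tendsto (fun a => log (x a) / v a) l (𝓝 γ)) :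
    Tendsto (fun a => log (x a * exp (-(γ * v a))) / v a) l (𝓝 0) := by
  refine (sub_self γ ▸ h.sub_const γ).congr' ?_
  filter_upwards [hx, hv] with a hx hv
  rw [log_mul hx (exp_ne_zero _), log_exp]
  field_simp
  ring

theorem stmt8 (d : ℕ) (f : Fin d → ℝ → ℝ) (m : ℝ → ℝ) (ε : ℝ) (hε : 0 < ε)
    (hf : ∀ i u, ε ≤ f i u)
    (hprod : ∀ u, ∏ i, f i u = m u)
    (hm : Tendsto (fun u => Real.log (m u) / u ^ 2) atTop (nhds (1 / 2))) :
    ∀ u : ℕ → ℝ, Tendsto u atTop atTop →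
      ∃ φ : ℕ → ℕ, StrictMono φ ∧
        ∀ i : Fin d,
          (∃ M : ℝ, M ∈ Set.Ici ε ∧
            Tendsto (fun j => f i (u (φ j))) atTop (nhds M)) ∨
          (Tendsto (fun j => f i (u (φ j))) atTop atTop ∧
            ∃ γ : ℝ, γ ∈ Set.Icc (0 : ℝ) (1 / 2) ∧
              ∃ c : ℕ → ℝ, (∀ j, 0 < c j) ∧
                (∀ j, f i (u (φ j)) = Real.exp (γ * (u (φ j)) ^ 2) * c j) ∧
                Tendsto (fun j => Real.log (c j) / (u (φ j)) ^ 2) atTop (nhds 0)) := by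
  intro u hu
  have hfpos : ∀ i v, 0 < f i v := fun i v => hε.trans_le (hf i v)
  set g : Fin d → ℕ → ℝ := fun i j => log (f i (u j)) / u j ^ 2
  have hlow : Tendsto (fun j => log ε / u j ^ 2) atTop (𝓝 0) :=
    tendsto_const_nhds.div_atTop ((tendsto_pow_atTop two_ne_zero).comp hu)
  have hlow_le : ∀ i j, log ε / u j ^ 2 ≤ g i j := fun i j =>
    div_le_div_of_nonneg_right (log_le_log hε (hf i _)) (sq_nonneg _)
  have hsum : Tendsto (fun j => ∑ i, g i j) atTop (𝓝 (1 / 2)) := by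
    refine (hm.comp hu).congr fun j => ?_
    simp only [g, Function.comp_apply, ← Finset.sum_div, ← hprod,
      log_prod fun i _ => (hfpos i _).ne']
  have hbdd := eventually_mem_closedBall_of_le_of_sum_le (a := -1) (C := 1)
    ((hlow.eventually (eventually_ge_nhds (by norm_num))).mono fun j hj i => hj.trans (hlow_le i j))
    (hsum.eventually (eventually_le_nhds (by norm_num)))
  obtain ⟨φ, hφ, L, γ, hconv⟩ := exists_subseq_tendsto_coe_ereal_and_tendsto
    (fun i j => f i (u j)) g Metric.isBounded_closedBall hbdd.frequently
  have huφ : Tendsto (fun j => u (φ j)) atTop atTop := hu.comp hφ.tendsto_atTop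
  refine ⟨φ, hφ, fun i => ?_⟩
  refine (exists_tendsto_nhds_or_tendsto_atTop_of_tendsto_coe_ereal
    (Eventually.of_forall fun j => hf i _) (hconv i).1).imp id fun htop =>
      ⟨htop, γ i, ?_, fun j => f i (u (φ j)) * exp (-(γ i * u (φ j) ^ 2)),
        fun j => mul_pos (hfpos i _) (exp_pos _), fun j => ?_, ?_⟩
  · exact mem_Icc_of_tendsto_of_tendsto_sum (hlow.comp hφ.tendsto_atTop)
      (fun k => Eventually.of_forall fun j => hlow_le k (φ j)) (fun k => (hconv k).2)
      (hsum.comp hφ.tendsto_atTop) i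
  · rw [mul_left_comm, ← exp_add, add_neg_cancel, exp_zero, mul_one]
  · exact tendsto_log_mul_exp_neg_div (Eventually.of_forall fun j => (hfpos i _).ne')
      (huφ.eventually_ne_atTop 0 |>.mono fun j hj => pow_ne_zero 2 hj) (hconv i).2
end
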